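/- Let P₃ = v₁v₂v₃ be a path and H a nontrivial connected graph with vertex u. Let G₁ = P₃(v₃)∘H(u) (identify an endpoint of P₃ with u) and G₂ = P₃(v₂)∘H(u) (identify the middle vertex of P₃ with u). Then ρ(G₁²) < ρ(G₂²). -/

import Mathlib

open SimpleGraph Finset Matrix
open scoped Classical

/-- Spectral radius of a finite simple graph: the supremum of eigenvalues of its
adjacency matrix. -/
noncomputable def specRad {V : Type*} [Fintype V] (G : SimpleGraph V) : ℝ :=
  sSup {μ : ℝ | ∃ x : V → ℝ, x ≠ 0 ∧
    (Matrix.of fun i j => if G.Adj i j then (1 : ℝ) else 0) *ᵥ x = μ • x}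

/-- The square of a graph: join vertices at distance 1 or 2. -/
def gsq {V : Type*} (G : SimpleGraph V) : SimpleGraph V :=
  SimpleGraph.fromRel (fun a b => G.dist a b = 1 ∨ G.dist a b = 2)

/-- Coalescence `H₁(v) ∘ H₂(w)`: identify the vertex `v` of `H₁` with the vertex `w`
of `H₂` (the identified vertex is `Sum.inl v`). -/
def coal {V₁ V₂ : Type*} (H₁ : SimpleGraph V₁) (v : V₁) (H₂ : SimpleGraph V₂) (w : V₂) :
    SimpleGraph (V₁ ⊕ {x : V₂ // x ≠ w}) :=
  SimpleGraph.fromRel (fun a b =>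
    match a, b with
    | Sum.inl a, Sum.inl b => H₁.Adj a b
    | Sum.inl a, Sum.inr b => a = v ∧ H₂.Adj w b.1
    | Sum.inr a, Sum.inr b => H₂.Adj a.1 b.1
    | Sum.inr _, Sum.inl _ => False)

/-- The star on `n` vertices with center `0`. -/
def starGraph (n : ℕ) : SimpleGraph (Fin n) :=
  SimpleGraph.fromRel (fun a _ => a.val = 0)

/-- The star on a vertex set `V` centered at `u`. -/
def starAt {V : Type*} (u : V) : SimpleGraph V :=
  SimpleGraph.fromRel (fun a _ => a = u)

/-- A unicyclic graph: connected with exactly as many edges as vertices. -/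
def IsUnicyclic {V : Type*} [Fintype V] (G : SimpleGraph V) : Prop :=
  G.Connected ∧ G.edgeSet.ncard = Fintype.card V

/-- Degree of a vertex. -/
noncomputable def deg {V : Type*} [Fintype V] (G : SimpleGraph V) (v : V) : ℕ :=
  (Finset.univ.filter fun u => G.Adj v u).card

/-- Average degree of a finite graph, as a real number. -/
noncomputable def avgDeg {V : Type*} [Fintype V] (G : SimpleGraph V) : ℝ :=
  (∑ v, (deg G v : ℝ)) / Fintype.card V

/-- Maximum degree of a finite graph. -/
noncomputable def maxDeg {V : Type*} [Fintype V] (G : SimpleGraph V) : ℕ :=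
  Finset.univ.sup fun v => deg G v

/-
Relabel `G₂ = P₃(v₂) ∘ H(u)` by swapping `v₂` and `v₃`. Then `G₁²` becomes a proper spanning
subgraph of `G₂²`: every edge of `G₁²` survives, and `G₂²` has in addition the edges from `v₁`
to the neighbours of `u` in `H`. Since `G₁²` is connected, its nonnegative Perron vector `y` is
positive, so `ρ(G₁²) |y|² = yᵀ A(G₁²) y < yᵀ A(G₂²) y ≤ ρ(G₂²) |y|²`, the last step being the
Rayleigh bound for the symmetric matrix `A(G₂²)`.
-/

theorem dotProduct_self_nonneg {n : Type*} [Fintype n] (x : n → ℝ) : 0 ≤ x ⬝ᵥ x :=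
  Fintype.sum_nonneg fun i => mul_self_nonneg (x i)

theorem dotProduct_self_pos {n : Type*} [Fintype n] {x : n → ℝ} (hx : x ≠ 0) : 0 < x ⬝ᵥ x := by
  simpa using (dotProduct_self_star_pos_iff (v := x)).2 hx

namespace Matrix

variable {n : Type*} [Fintype n]

theorem IsSymm.dotProduct_mulVec_comm {A : Matrix n n ℝ} (hA : A.IsSymm) (x y : n → ℝ) :
    x ⬝ᵥ A *ᵥ y = y ⬝ᵥ A *ᵥ x := by
  rw [dotProduct_mulVec, ← mulVec_transpose, hA.eq, dotProduct_comm]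

theorem IsSymm.mulVec_eq_smul_of_dotProduct_mulVec_le {A : Matrix n n ℝ} (hA : A.IsSymm) {M : ℝ}
    (hM : ∀ x, x ⬝ᵥ A *ᵥ x ≤ M * (x ⬝ᵥ x)) {y : n → ℝ}
    (hy : y ⬝ᵥ A *ᵥ y = M * (y ⬝ᵥ y)) : A *ᵥ y = M • y := by
  set r := M • y - A *ᵥ y
  have hry : M * (r ⬝ᵥ y) - r ⬝ᵥ A *ᵥ y = r ⬝ᵥ r := by
    simp only [r, dotProduct_sub, dotProduct_smul, smul_eq_mul, sub_dotProduct, smul_dotProduct,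
      dotProduct_comm y (A *ᵥ y)]
  -- `x ↦ M (x ⬝ x) - x ⬝ A x` is nonnegative and vanishes at `y`; along `y + t • r` it equals
  -- `2 t (r ⬝ r) + O(t²)`, so `r ⬝ r = 0`
  have hline : ∀ t : ℝ,
      0 ≤ (M * (r ⬝ᵥ r) - r ⬝ᵥ A *ᵥ r) * (t * t) + 2 * (r ⬝ᵥ r) * t + 0 := by
    intro t
    have := hM (y + t • r)
    simp only [mulVec_add, mulVec_smul, add_dotProduct, dotProduct_add, smul_dotProduct,
      dotProduct_smul, smul_eq_mul, hA.dotProduct_mulVec_comm y r, dotProduct_comm y r] at this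
    linear_combination this - hy + 2 * t * hry
  have hrr : r ⬝ᵥ r = 0 := by
    have := discrim_le_zero hline
    rw [discrim] at this
    nlinarith
  exact (sub_eq_zero.1 (dotProduct_self_eq_zero.1 hrr)).symm

theorem exists_dotProduct_mulVec_le_eq [Nonempty n] (A : Matrix n n ℝ) :
    ∃ M, (∀ x, x ⬝ᵥ A *ᵥ x ≤ M * (x ⬝ᵥ x)) ∧ ∃ y ≠ 0, y ⬝ᵥ A *ᵥ y = M * (y ⬝ᵥ y) := by
  set S := {x : n → ℝ | x ⬝ᵥ x = 1}
  have hS_bdd : Bornology.IsBounded S := by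
    refine (Metric.isBounded_closedBall (x := 0) (r := 1)).subset fun x hx => ?_
    refine mem_closedBall_zero_iff.2 <| (pi_norm_le_iff_of_nonneg zero_le_one).2 fun i => ?_
    rw [Real.norm_eq_abs, abs_le_one_iff_mul_self_le_one, ← show x ⬝ᵥ x = 1 from hx]
    exact Finset.single_le_sum (fun j _ => mul_self_nonneg (x j)) (Finset.mem_univ i)
  have hS : IsCompact S := Metric.isCompact_of_isClosed_isBounded
    (isClosed_eq (continuous_id.dotProduct continuous_id) continuous_const) hS_bdd
  have hS_ne : S.Nonempty := ⟨Pi.single (Classical.arbitrary n) 1, by simp [S]⟩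
  have hf : Continuous fun x : n → ℝ => x ⬝ᵥ A *ᵥ x :=
    continuous_id.dotProduct (continuous_const.matrix_mulVec continuous_id)
  obtain ⟨y, hyS, hmax⟩ := hS.exists_isMaxOn hS_ne hf.continuousOn
  refine ⟨y ⬝ᵥ A *ᵥ y, fun x => ?_, y, ?_, by rw [show y ⬝ᵥ y = 1 from hyS, mul_one]⟩
  · rcases eq_or_ne x 0 with rfl | hx
    · simp
    set c := √(x ⬝ᵥ x)
    have hc : 0 < c := Real.sqrt_pos.2 (dotProduct_self_pos hx)
    have hc2 : c ^ 2 = x ⬝ᵥ x := Real.sq_sqrt (dotProduct_self_nonneg x)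
    have h := @hmax (c⁻¹ • x) (by
      simp only [S, Set.mem_ofPred_eq, smul_dotProduct, dotProduct_smul, smul_eq_mul, ← hc2]
      field_simp)
    simp only [Set.mem_ofPred_eq, mulVec_smul, smul_dotProduct, dotProduct_smul, smul_eq_mul] at h
    rw [← hc2]
    have : c⁻¹ * (c⁻¹ * x ⬝ᵥ A *ᵥ x) = (x ⬝ᵥ A *ᵥ x) / c ^ 2 := by field_simp
    rwa [this, div_le_iff₀ (by positivity)] at h
  · rintro rfl
    simp [S] at hyS

theorem dotProduct_mulVec_le_abs {A : Matrix n n ℝ} (hA : ∀ i j, 0 ≤ A i j) (x : n → ℝ) :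
    x ⬝ᵥ A *ᵥ x ≤ |x| ⬝ᵥ A *ᵥ |x| := by
  simp only [dotProduct, mulVec, Finset.mul_sum, Pi.abs_apply]
  refine Finset.sum_le_sum fun i _ => Finset.sum_le_sum fun j _ => ?_
  calc x i * (A i j * x j) ≤ |x i * (A i j * x j)| := le_abs_self _
    _ = |x i| * (A i j * |x j|) := by rw [abs_mul, abs_mul, abs_of_nonneg (hA i j)]

theorem IsSymm.exists_nonneg_eigenvector_of_nonneg [Nonempty n] {A : Matrix n n ℝ}
    (hA : A.IsSymm) (hA₀ : ∀ i j, 0 ≤ A i j) :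
    ∃ M, (∀ x, x ⬝ᵥ A *ᵥ x ≤ M * (x ⬝ᵥ x)) ∧ ∃ y, 0 ≤ y ∧ y ≠ 0 ∧ A *ᵥ y = M • y := by
  obtain ⟨M, hM, y, hy, hyM⟩ := exists_dotProduct_mulVec_le_eq A
  have habs : |y| ⬝ᵥ |y| = y ⬝ᵥ y := by simp [dotProduct, abs_mul_abs_self]
  refine ⟨M, hM, |y|, abs_nonneg y, by simpa using hy,
    hA.mulVec_eq_smul_of_dotProduct_mulVec_le hM ?_⟩
  exact le_antisymm (hM _) (habs ▸ hyM ▸ dotProduct_mulVec_le_abs hA₀ y)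

end Matrix

theorem SimpleGraph.adjMatrix_nonneg {V : Type*} (G : SimpleGraph V) (i j : V) :
    0 ≤ G.adjMatrix ℝ i j := by
  rw [adjMatrix_apply]; split_ifs <;> norm_num

section Spectral

variable {V : Type*} [Fintype V]

theorem specRad_eq_sSup (G : SimpleGraph V) :
    specRad G = sSup {μ : ℝ | ∃ x : V → ℝ, x ≠ 0 ∧ G.adjMatrix ℝ *ᵥ x = μ • x} := rfl

theorem specRad_eq_of_dotProduct_mulVec_le {G : SimpleGraph V} {M : ℝ}
    (hM : ∀ x, x ⬝ᵥ G.adjMatrix ℝ *ᵥ x ≤ M * (x ⬝ᵥ x)) {y : V → ℝ} (hy : y ≠ 0)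
    (hyM : G.adjMatrix ℝ *ᵥ y = M • y) : specRad G = M := by
  rw [specRad_eq_sSup]
  refine IsGreatest.csSup_eq ⟨⟨y, hy, hyM⟩, ?_⟩
  rintro μ ⟨x, hx, hxμ⟩
  have := hM x
  rw [hxμ, dotProduct_smul, smul_eq_mul] at this
  exact le_of_mul_le_mul_right this (dotProduct_self_pos hx)

theorem dotProduct_adjMatrix_mulVec_le_specRad [Nonempty V] (G : SimpleGraph V) (x : V → ℝ) :
    x ⬝ᵥ G.adjMatrix ℝ *ᵥ x ≤ specRad G * (x ⬝ᵥ x) := by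
  obtain ⟨M, hM, y, -, hy, hyM⟩ :=
    (G.isSymm_adjMatrix).exists_nonneg_eigenvector_of_nonneg (adjMatrix_nonneg G)
  rw [specRad_eq_of_dotProduct_mulVec_le hM hy hyM]
  exact hM x

theorem exists_nonneg_eigenvector_specRad [Nonempty V] (G : SimpleGraph V) :
    ∃ y, 0 ≤ y ∧ y ≠ 0 ∧ G.adjMatrix ℝ *ᵥ y = specRad G • y := by
  obtain ⟨M, hM, y, hy₀, hy, hyM⟩ :=
    (G.isSymm_adjMatrix).exists_nonneg_eigenvector_of_nonneg (adjMatrix_nonneg G)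
  exact ⟨y, hy₀, hy, specRad_eq_of_dotProduct_mulVec_le hM hy hyM ▸ hyM⟩

theorem pos_of_nonneg_eigenvector {G : SimpleGraph V} (hG : G.Preconnected) {y : V → ℝ}
    (hy₀ : 0 ≤ y) (hy : y ≠ 0) {μ : ℝ} (hyμ : G.adjMatrix ℝ *ᵥ y = μ • y) (v : V) : 0 < y v := by
  -- the zero set of `y` is closed under adjacency: `∑_{w ~ v} y w = μ y v`
  have hzero : ∀ v w, G.Adj v w → y v = 0 → y w = 0 := by
    intro v w hvw hv
    have hsum := congrFun hyμ v
    rw [adjMatrix_mulVec_apply, Pi.smul_apply, hv, smul_zero,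
      Finset.sum_eq_zero_iff_of_nonneg fun w _ => hy₀ w] at hsum
    exact hsum w (by simpa using hvw)
  have hwalk : ∀ {a b}, G.Walk a b → y a = 0 → y b = 0 := by
    intro a b p
    induction p with
    | nil => exact id
    | cons h _ ih => exact fun ha => ih (hzero _ _ h ha)
  exact (hy₀ v).lt_of_ne fun hv => hy (funext fun w => hwalk (hG v w).some hv.symm)

theorem dotProduct_adjMatrix_mulVec_lt_of_lt {G G' : SimpleGraph V} (h : G < G') {y : V → ℝ}
    (hy : ∀ v, 0 < y v) : y ⬝ᵥ G.adjMatrix ℝ *ᵥ y < y ⬝ᵥ G'.adjMatrix ℝ *ᵥ y := by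
  obtain ⟨a, b, hab', hab⟩ : ∃ a b, G'.Adj a b ∧ ¬ G.Adj a b := by
    by_contra! hc
    exact h.not_ge fun a b => hc a b
  have hle : ∀ i j, (if G.Adj i j then y i * y j else 0) ≤ if G'.Adj i j then y i * y j else 0 := by
    intro i j
    split_ifs with hG hG'
    exacts [le_rfl, absurd (h.le hG) hG', (mul_pos (hy i) (hy j)).le, le_rfl]
  simp only [dotProduct_mulVec_adjMatrix]
  refine Finset.sum_lt_sum (fun i _ => Finset.sum_le_sum fun j _ => hle i j)
    ⟨a, Finset.mem_univ _, Finset.sum_lt_sum (fun j _ => hle a j) ⟨b, Finset.mem_univ _, ?_⟩⟩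
  simpa [hab, hab'] using mul_pos (hy a) (hy b)

theorem specRad_lt_of_lt {G G' : SimpleGraph V} (hG : G.Preconnected) (h : G < G') :
    specRad G < specRad G' := by
  have : Nonempty V := by
    by_contra hV
    exact h.ne (SimpleGraph.ext (funext fun a => (hV ⟨a⟩).elim))
  obtain ⟨y, hy₀, hy, hyρ⟩ := exists_nonneg_eigenvector_specRad G
  have hpos := pos_of_nonneg_eigenvector hG hy₀ hy hyρ
  have hlt := dotProduct_adjMatrix_mulVec_lt_of_lt h hpos
  rw [hyρ, dotProduct_smul, smul_eq_mul] at hlt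
  exact lt_of_mul_lt_mul_right (hlt.trans_le (dotProduct_adjMatrix_mulVec_le_specRad G' y))
    (dotProduct_self_nonneg y)

theorem exists_eigenvector_of_iso {W : Type*} [Fintype W] {G : SimpleGraph V} {G' : SimpleGraph W}
    (e : G ≃g G') {μ : ℝ} (h : ∃ x ≠ 0, G'.adjMatrix ℝ *ᵥ x = μ • x) :
    ∃ x ≠ 0, G.adjMatrix ℝ *ᵥ x = μ • x := by
  obtain ⟨x, hx, hxμ⟩ := h
  refine ⟨x ∘ e, fun h0 => hx (funext fun w => by simpa using congrFun h0 (e.symm w)), ?_⟩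
  have hx' : (x ∘ e) ∘ e.toEquiv.symm = x :=
    funext fun w => congrArg x (e.toEquiv.apply_symm_apply w)
  rw [← e.toEmbedding.submatrix_adjMatrix ℝ, show ⇑e.toEmbedding = ⇑e.toEquiv from rfl,
    submatrix_mulVec_equiv, hx', hxμ]
  rfl

theorem specRad_congr {W : Type*} [Fintype W] {G : SimpleGraph V} {G' : SimpleGraph W}
    (e : G ≃g G') : specRad G = specRad G' := by
  rw [specRad_eq_sSup, specRad_eq_sSup]
  congr 1
  ext μ
  exact ⟨exists_eigenvector_of_iso e.symm, exists_eigenvector_of_iso e⟩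

end Spectral

theorem gsq_adj {V : Type*} (G : SimpleGraph V) (a b : V) :
    (gsq G).Adj a b ↔ a ≠ b ∧ (G.Adj a b ∨ ∃ c, G.Adj a c ∧ G.Adj c b) := by
  have h2 : G.dist a b = 2 ↔ a ≠ b ∧ ¬G.Adj a b ∧ ∃ c, G.Adj a c ∧ G.Adj c b := by
    rw [SimpleGraph.dist, ENat.toNat_eq_iff two_ne_zero]
    simp [edist_eq_two_iff, Set.Nonempty, mem_commonNeighbors, G.adj_comm b]
  rw [gsq, fromRel_adj, G.dist_comm (u := b), or_self, dist_eq_one_iff_adj, h2]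
  tauto

theorem le_gsq {V : Type*} (G : SimpleGraph V) : G ≤ gsq G :=
  fun a b h => (gsq_adj G a b).2 ⟨h.ne, .inl h⟩

section Coalescence

variable {V₁ V₂ : Type*} {H₁ : SimpleGraph V₁} {v : V₁} {H₂ : SimpleGraph V₂} {w : V₂}

@[simp]
theorem coal_adj_inl_inl {a b : V₁} : (coal H₁ v H₂ w).Adj (.inl a) (.inl b) ↔ H₁.Adj a b := by
  simp only [coal, fromRel_adj, ne_eq, Sum.inl.injEq, H₁.adj_comm b, or_self]
  exact ⟨And.right, fun h => ⟨h.ne, h⟩⟩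

@[simp]
theorem coal_adj_inl_inr {a : V₁} {b : {x // x ≠ w}} :
    (coal H₁ v H₂ w).Adj (.inl a) (.inr b) ↔ a = v ∧ H₂.Adj w b := by
  simp [coal]

@[simp]
theorem coal_adj_inr_inl {a : {x // x ≠ w}} {b : V₁} :
    (coal H₁ v H₂ w).Adj (.inr a) (.inl b) ↔ b = v ∧ H₂.Adj w a := by
  rw [adj_comm, coal_adj_inl_inr]

@[simp]
theorem coal_adj_inr_inr {a b : {x // x ≠ w}} :
    (coal H₁ v H₂ w).Adj (.inr a) (.inr b) ↔ H₂.Adj a b := by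
  simp only [coal, fromRel_adj, ne_eq, Sum.inr.injEq, H₂.adj_comm b, or_self]
  exact ⟨And.right, fun h => ⟨fun hab => h.ne (congrArg Subtype.val hab), h⟩⟩

def coalInl : H₁ →g coal H₁ v H₂ w where
  toFun := .inl
  map_rel' := coal_adj_inl_inl.2

noncomputable def coalInr : H₂ →g coal H₁ v H₂ w where
  toFun x := if h : x = w then .inl v else .inr ⟨x, h⟩
  map_rel' {x y} hxy := by
    by_cases hx : x = w <;> by_cases hy : y = w <;> simp_all [adj_comm]

theorem coal_preconnected (h₁ : H₁.Preconnected) (h₂ : H₂.Preconnected) :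
    (coal H₁ v H₂ w).Preconnected := by
  suffices h : ∀ x, (coal H₁ v H₂ w).Reachable x (.inl v) from fun x y => (h x).trans (h y).symm
  rintro (a | ⟨x, hx⟩)
  · exact (h₁ a v).map coalInl
  · simpa [coalInr, hx] using (h₂ x w).map (coalInr (H₁ := H₁) (v := v) (w := w))

end Coalescence

section PathCoalescence

variable {V : Type*} (H : SimpleGraph V) (u : V)

-- Swapping `1` and `2` sends every edge of `G₁` other than `01` to an edge of `G₂`, and `01` to
-- `02`, an edge of `G₂²`; the 2-paths of `G₁` through `01` join `0` and `2`, adjacent in `G₂`.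
theorem gsq_coal_end_le_comap_middle :
    gsq (coal (pathGraph 3) 2 H u) ≤
      (gsq (coal (pathGraph 3) 1 H u)).comap (Equiv.sumCongr (Equiv.swap 1 2) (Equiv.refl _)) := by
  intro a b hab
  rw [comap_adj, gsq_adj] at *
  obtain ⟨hne, h | ⟨c, hac, hcb⟩⟩ := hab
  · refine ⟨(Equiv.injective _).ne hne, ?_⟩
    rcases a with a | a <;> rcases b with b | b <;> (try fin_cases a) <;> (try fin_cases b) <;>
      simp_all [pathGraph_adj, Sum.exists, Fin.exists_fin_succ, Equiv.swap_apply_of_ne_of_ne]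
  · refine ⟨(Equiv.injective _).ne hne, ?_⟩
    rcases a with a | a <;> rcases b with b | b <;> rcases c with c | c <;> (try fin_cases a) <;>
      (try fin_cases b) <;> (try fin_cases c) <;>
      simp_all [pathGraph_adj, Sum.exists, Fin.exists_fin_succ, Equiv.swap_apply_of_ne_of_ne] <;>
      aesop

theorem gsq_coal_end_lt_comap_middle {b : V} (hb : H.Adj u b) :
    gsq (coal (pathGraph 3) 2 H u) <
      (gsq (coal (pathGraph 3) 1 H u)).comap (Equiv.sumCongr (Equiv.swap 1 2) (Equiv.refl _)) := by
  refine lt_of_le_not_ge (gsq_coal_end_le_comap_middle H u) fun hle => ?_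
  -- `0` and a neighbour of `u` are at distance 2 through the middle vertex `1 = u` of `G₂`,
  -- but at distance 3 in `G₁`
  have h := @hle (.inl 0) (.inr ⟨b, hb.ne'⟩)
  simp [gsq_adj, pathGraph_adj, Sum.exists, Equiv.swap_apply_of_ne_of_ne, hb] at h

end PathCoalescence

/-- Attaching a nontrivial connected graph `H` at the middle
vertex of `P₃` gives a larger spectral radius of the square than attaching it
at an endpoint. -/
theorem specRad_sq_P3_end_lt_middle {V : Type*} [Fintype V] (H : SimpleGraph V)
    (hH : H.Connected) (hcard : 1 < Fintype.card V) (u : V) :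
    specRad (gsq (coal (pathGraph 3) 2 H u)) <
      specRad (gsq (coal (pathGraph 3) 1 H u)) := by
  have : Nontrivial V := Fintype.one_lt_card_iff_nontrivial.1 hcard
  obtain ⟨b, hb⟩ := hH.preconnected.exists_adj_of_nontrivial u
  have hpre : (gsq (coal (pathGraph 3) 2 H u)).Preconnected :=
    (coal_preconnected (pathGraph_preconnected 3) hH.preconnected).mono (le_gsq _)
  calc specRad (gsq (coal (pathGraph 3) 2 H u))
      < specRad ((gsq (coal (pathGraph 3) 1 H u)).comap
          (Equiv.sumCongr (Equiv.swap 1 2) (Equiv.refl _))) :=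
        specRad_lt_of_lt hpre (gsq_coal_end_lt_comap_middle H u hb)
    _ = specRad (gsq (coal (pathGraph 3) 1 H u)) := specRad_congr (Iso.comap _ _)
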